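/- If G is a graph of order n with δ_h(G) ≥ 1 and matching number ν(G) ≥ γ_h(G), then γ_{trh}(G) ≤ ((2 ln δ_h + δ_h + 2)/δ_h) · n − 2ν(G). -/

import Mathlib

/-!
Take a maximum matching `M` and a 2-step dominating set `D` with
`|D| ≤ (ln δ_h + 1) / δ_h · n`. The latter comes from the probabilistic method: a random set
containing each vertex independently with probability `p = ln δ_h / δ_h` misses all of
`N₂(v)` with probability `(1 - p) ^ δ_h ≤ 1 / δ_h`, and adding one vertex of `N₂(v)` for
every such `v` costs at most `n / δ_h` in expectation.
Deleting from `V` both ends of every edge of `M` that avoids `D` leaves a total restrained hop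
dominating set: it contains `D`, and each deleted vertex has its deleted partner as a neighbour.
At most `|D|` edges of `M` meet `D`, so at least `2ν - 2|D|` vertices are deleted.
-/

open Finset

noncomputable section
open scoped Classical

variable {n : ℕ}

/-- The set of vertices at distance exactly 2 from `i`. -/
def N2 (G : SimpleGraph (Fin n)) (i : Fin n) : Finset (Fin n) :=
  Finset.univ.filter (fun j => G.dist i j = 2)

/-- The neighborhood of `i`. -/
def Nbr (G : SimpleGraph (Fin n)) (i : Fin n) : Finset (Fin n) :=
  Finset.univ.filter (fun j => G.Adj i j)

/-- Hop degree of a vertex. -/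
def hopDeg (G : SimpleGraph (Fin n)) (i : Fin n) : ℕ := (N2 G i).card

/-- Minimum hop degree. -/
def minHopDeg (G : SimpleGraph (Fin n)) : ℕ := ⨅ i, hopDeg G i

/-- Minimum degree. -/
def minDeg (G : SimpleGraph (Fin n)) : ℕ := ⨅ i, (Nbr G i).card

def IsHopDomSet (G : SimpleGraph (Fin n)) (S : Finset (Fin n)) : Prop :=
  ∀ u, u ∉ S → ∃ v ∈ S, G.dist u v = 2

def IsTwoStepDomSet (G : SimpleGraph (Fin n)) (S : Finset (Fin n)) : Prop :=
  ∀ u : Fin n, ∃ v ∈ S, G.dist u v = 2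

def IsRestrainedHopDomSet (G : SimpleGraph (Fin n)) (S : Finset (Fin n)) : Prop :=
  IsHopDomSet G S ∧ ∀ u, u ∉ S → ∃ v, v ∉ S ∧ G.Adj u v

def IsTotalRestrainedHopDomSet (G : SimpleGraph (Fin n)) (S : Finset (Fin n)) : Prop :=
  IsTwoStepDomSet G S ∧ ∀ u, u ∉ S → ∃ v, v ∉ S ∧ G.Adj u v

def IsTwoStepRestrainedDomSet (G : SimpleGraph (Fin n)) (S : Finset (Fin n)) : Prop :=
  IsHopDomSet G S ∧ ∀ u, u ∉ S → ∃ v, v ∉ S ∧ G.dist u v = 2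

def IsTotalTwoStepRestrainedDomSet (G : SimpleGraph (Fin n)) (S : Finset (Fin n)) : Prop :=
  IsTwoStepDomSet G S ∧ ∀ u, u ∉ S → ∃ v, v ∉ S ∧ G.dist u v = 2

def hopDomNum (G : SimpleGraph (Fin n)) : ℕ :=
  sInf {k | ∃ S : Finset (Fin n), IsHopDomSet G S ∧ S.card = k}

def twoStepDomNum (G : SimpleGraph (Fin n)) : ℕ :=
  sInf {k | ∃ S : Finset (Fin n), IsTwoStepDomSet G S ∧ S.card = k}

def rhDomNum (G : SimpleGraph (Fin n)) : ℕ :=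
  sInf {k | ∃ S : Finset (Fin n), IsRestrainedHopDomSet G S ∧ S.card = k}

def trhDomNum (G : SimpleGraph (Fin n)) : ℕ :=
  sInf {k | ∃ S : Finset (Fin n), IsTotalRestrainedHopDomSet G S ∧ S.card = k}

def tsrDomNum (G : SimpleGraph (Fin n)) : ℕ :=
  sInf {k | ∃ S : Finset (Fin n), IsTwoStepRestrainedDomSet G S ∧ S.card = k}

def ttsrDomNum (G : SimpleGraph (Fin n)) : ℕ :=
  sInf {k | ∃ S : Finset (Fin n), IsTotalTwoStepRestrainedDomSet G S ∧ S.card = k}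

/-- The graph `Dist(G;2)` joining vertices at distance exactly 2 in `G`. -/
def dist2Graph (G : SimpleGraph (Fin n)) : SimpleGraph (Fin n) where
  Adj u v := u ≠ v ∧ G.dist u v = 2
  symm := by
    constructor
    intro u v h
    exact ⟨h.1.symm, by rw [SimpleGraph.dist_comm]; exact h.2⟩
  loopless := ⟨fun v h => h.1 rfl⟩

def domNum (H : SimpleGraph (Fin n)) : ℕ :=
  sInf {k | ∃ S : Finset (Fin n), (∀ u, u ∉ S → ∃ v ∈ S, H.Adj u v) ∧ S.card = k}

def totalDomNum (H : SimpleGraph (Fin n)) : ℕ :=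
  sInf {k | ∃ S : Finset (Fin n), (∀ u : Fin n, ∃ v ∈ S, H.Adj u v) ∧ S.card = k}

/-- Matching number: maximum number of edges in a matching. -/
def matchingNum (G : SimpleGraph (Fin n)) : ℕ :=
  sSup {k | ∃ M : SimpleGraph.Subgraph G, M.IsMatching ∧ M.edgeSet.ncard = k}

/-- A hop matching: a set of paths of length two, no two of which share an end vertex. -/
def IsHopMatching (G : SimpleGraph (Fin n)) (H : Finset (Fin n × Fin n × Fin n)) : Prop :=
  (∀ t ∈ H, G.Adj t.1 t.2.1 ∧ G.Adj t.2.1 t.2.2 ∧ t.1 ≠ t.2.2) ∧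
  ∀ t ∈ H, ∀ t' ∈ H, t ≠ t' →
    t.1 ≠ t'.1 ∧ t.1 ≠ t'.2.2 ∧ t.2.2 ≠ t'.1 ∧ t.2.2 ≠ t'.2.2

/-- Hop matching number. -/
def hopMatchingNum (G : SimpleGraph (Fin n)) : ℕ :=
  sSup {k | ∃ H : Finset (Fin n × Fin n × Fin n), IsHopMatching G H ∧ H.card = k}

def frh (G : SimpleGraph (Fin n)) (p : Fin n → ℝ) : ℝ :=
  (∑ i, p i) + (∑ i, (1 - p i) * ∏ j ∈ N2 G i, (1 - p j)) +
  ∑ i, (1 - p i) * (1 - (1 - p i) * ∏ j ∈ N2 G i, (1 - p j)) *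
    ∏ j ∈ Nbr G i, (p j + (1 - p j) * ∏ k ∈ N2 G j, (1 - p k))

def f2sr (G : SimpleGraph (Fin n)) (p : Fin n → ℝ) : ℝ :=
  (∑ i, p i) + (∑ i, (1 - p i) * ∏ j ∈ N2 G i, (1 - p j)) +
  ∑ i, (1 - p i) * (1 - (1 - p i) * ∏ j ∈ N2 G i, (1 - p j)) *
    ∏ j ∈ N2 G i, (p j + (1 - p j) * ∏ k ∈ N2 G j, (1 - p k))

def ZSet (G : SimpleGraph (Fin n)) (X : Finset (Fin n)) : Finset (Fin n) :=
  Finset.univ.filter (fun i => i ∉ X ∧ N2 G i ∩ X = ∅)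

def YSet (G : SimpleGraph (Fin n)) (X : Finset (Fin n)) : Finset (Fin n) :=
  Finset.univ.filter (fun i => i ∉ X ∪ ZSet G X ∧ Nbr G i ⊆ X ∪ ZSet G X)

def DSet (G : SimpleGraph (Fin n)) (X : Finset (Fin n)) : Finset (Fin n) :=
  X ∪ ZSet G X ∪ YSet G X

section RandomSubset

variable {α : Type*} [Fintype α]

/-- The probability of `t` under the random subset of `α` that contains each element
independently with probability `p`. -/
def bernoulliWeight (p : ℝ) (t : Finset α) : ℝ :=
  p ^ #t * (1 - p) ^ (Fintype.card α - #t)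

lemma bernoulliWeight_nonneg {p : ℝ} (hp₀ : 0 ≤ p) (hp₁ : p ≤ 1) (t : Finset α) :
    0 ≤ bernoulliWeight p t :=
  mul_nonneg (pow_nonneg hp₀ _) (pow_nonneg (sub_nonneg.2 hp₁) _)

lemma sum_bernoulliWeight_filter_disjoint (p : ℝ) (A : Finset α) :
    ∑ t with Disjoint t A, bernoulliWeight p t = (1 - p) ^ #A := by
  have hfilter : ({t | Disjoint t A} : Finset (Finset α)) = Aᶜ.powerset := by
    ext t; simp [subset_compl_iff_disjoint_right]
  have hsplit : ∀ t ∈ Aᶜ.powerset, bernoulliWeight p t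
      = (1 - p) ^ #A * (p ^ #t * (1 - p) ^ (#Aᶜ - #t)) := by
    intro t ht
    have htA := card_le_card (mem_powerset.1 ht)
    have hA := card_le_univ A
    rw [card_compl] at htA ⊢
    rw [bernoulliWeight, mul_left_comm, ← pow_add]
    congr 2
    omega
  rw [hfilter, sum_congr rfl hsplit, ← mul_sum, sum_pow_mul_eq_add_pow]
  simp

lemma sum_bernoulliWeight (p : ℝ) : ∑ t : Finset α, bernoulliWeight p t = 1 := by
  simpa using sum_bernoulliWeight_filter_disjoint p (∅ : Finset α)

lemma sum_bernoulliWeight_mul_card (p : ℝ) :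
    ∑ t : Finset α, bernoulliWeight p t * #t = p * Fintype.card α := by
  have hmem : ∀ a : α, ∑ t with a ∈ t, bernoulliWeight p t = p := by
    intro a
    have h := sum_filter_add_sum_filter_not univ (fun t => a ∈ t) (bernoulliWeight p)
    simp only [← disjoint_singleton_right] at h
    rw [sum_bernoulliWeight, sum_bernoulliWeight_filter_disjoint] at h
    simp only [card_singleton, pow_one] at h
    linarith
  calc ∑ t : Finset α, bernoulliWeight p t * #t
      = ∑ a : α, ∑ t with a ∈ t, bernoulliWeight p t := by
        simp only [sum_filter]
        rw [sum_comm]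
        refine sum_congr rfl fun t _ => ?_
        rw [← sum_filter, sum_const, mul_comm]
        simp
    _ = p * Fintype.card α := by simp [hmem, mul_comm]

lemma exists_le_sum_mul_of_sum_eq_one {β : Type*} [Fintype β] [Nonempty β] {w : β → ℝ}
    (hw₀ : ∀ b, 0 ≤ w b) (hw₁ : ∑ b, w b = 1) (g : β → ℝ) :
    ∃ b, g b ≤ ∑ b, w b * g b := by
  obtain ⟨b₀, -, hmin⟩ := exists_min_image univ g univ_nonempty
  refine ⟨b₀, ?_⟩
  calc g b₀ = ∑ b, w b * g b₀ := by rw [← sum_mul, hw₁, one_mul]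
    _ ≤ ∑ b, w b * g b :=
      sum_le_sum fun b _ => mul_le_mul_of_nonneg_left (hmin b (mem_univ b)) (hw₀ b)

variable {ι : Type*} [Fintype ι]

lemma sum_bernoulliWeight_mul_card_add_card_disjoint (p : ℝ) (N : ι → Finset α) :
    ∑ t : Finset α, bernoulliWeight p t * (#t + #{i | Disjoint t (N i)})
      = p * Fintype.card α + ∑ i, (1 - p) ^ #(N i) := by
  have hmissed : ∑ t : Finset α, bernoulliWeight p t * #{i | Disjoint t (N i)}
      = ∑ i, ∑ t with Disjoint t (N i), bernoulliWeight p t := by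
    simp only [card_filter, Nat.cast_sum, mul_sum, sum_filter]
    rw [sum_comm]
    simp
  simp only [mul_add, sum_add_distrib, sum_bernoulliWeight_mul_card, hmissed,
    sum_bernoulliWeight_filter_disjoint]

theorem exists_hittingSet_card_le (N : ι → Finset α) (hN : ∀ i, (N i).Nonempty)
    {p : ℝ} (hp₀ : 0 ≤ p) (hp₁ : p ≤ 1) :
    ∃ D : Finset α, (∀ i, (N i ∩ D).Nonempty) ∧
      (#D : ℝ) ≤ p * Fintype.card α + ∑ i, (1 - p) ^ #(N i) := by
  obtain ⟨t, ht⟩ := exists_le_sum_mul_of_sum_eq_one (bernoulliWeight_nonneg hp₀ hp₁)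
    (sum_bernoulliWeight p) fun t : Finset α => (#t + #{i | Disjoint t (N i)} : ℝ)
  rw [sum_bernoulliWeight_mul_card_add_card_disjoint] at ht
  let missed : Finset ι := {i | Disjoint t (N i)}
  refine ⟨t ∪ missed.image fun i => (hN i).choose, fun i => ?_, ?_⟩
  · by_cases hi : Disjoint t (N i)
    · exact ⟨_, mem_inter.2 ⟨(hN i).choose_spec,
        mem_union_right _ (mem_image_of_mem _ (by simpa [missed] using hi))⟩⟩
    · obtain ⟨a, hat, haN⟩ := not_disjoint_iff.1 hi
      exact ⟨a, mem_inter.2 ⟨haN, mem_union_left _ hat⟩⟩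
  · calc (#(t ∪ missed.image fun i => (hN i).choose) : ℝ)
        ≤ #t + #missed := by
          exact_mod_cast (card_union_le _ _).trans (Nat.add_le_add_left card_image_le _)
      _ ≤ _ := ht

theorem exists_hittingSet_card_le_of_le_card (N : ι → Finset α) {δ : ℕ} (hδ : 1 ≤ δ)
    (hN : ∀ i, δ ≤ #(N i)) :
    ∃ D : Finset α, (∀ i, (N i ∩ D).Nonempty) ∧
      (#D : ℝ) ≤ Real.log δ / δ * Fintype.card α + Fintype.card ι / δ := by
  have hδ₀ : (0 : ℝ) < δ := by exact_mod_cast hδ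
  have hlog : Real.log δ ≤ δ := (Real.log_le_sub_one_of_pos hδ₀).trans (by linarith)
  set p := Real.log δ / δ
  have hp₀ : 0 ≤ p := div_nonneg (Real.log_nonneg (by exact_mod_cast hδ)) hδ₀.le
  have hp₁ : p ≤ 1 := (div_le_one hδ₀).2 hlog
  have hmiss : ∀ i, (1 - p) ^ #(N i) ≤ 1 / δ := fun i => calc
    (1 - p) ^ #(N i) ≤ (1 - p) ^ δ := pow_le_pow_of_le_one (by linarith) (by linarith) (hN i)
    _ ≤ Real.exp (-Real.log δ) := Real.one_sub_div_pow_le_exp_neg hlog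
    _ = 1 / δ := by rw [Real.exp_neg, Real.exp_log hδ₀, one_div]
  obtain ⟨D, hD, hcard⟩ := exists_hittingSet_card_le N
    (fun i => card_pos.1 (hδ.trans (hN i))) hp₀ hp₁
  refine ⟨D, hD, hcard.trans ?_⟩
  grw [sum_le_sum fun i _ => hmiss i]
  rw [sum_const, card_univ, nsmul_eq_mul, mul_one_div]

end RandomSubset

lemma minHopDeg_le_card_N2 (G : SimpleGraph (Fin n)) (v : Fin n) :
    minHopDeg G ≤ #(N2 G v) :=
  ciInf_le (OrderBot.bddBelow _) v

theorem exists_isTwoStepDomSet_card_le (G : SimpleGraph (Fin n)) (hδ : 1 ≤ minHopDeg G) :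
    ∃ D : Finset (Fin n), IsTwoStepDomSet G D ∧
      (#D : ℝ) ≤ (Real.log (minHopDeg G) + 1) / minHopDeg G * n := by
  obtain ⟨D, hD, hcard⟩ :=
    exists_hittingSet_card_le_of_le_card (N2 G) hδ (minHopDeg_le_card_N2 G)
  refine ⟨D, fun u => ?_, ?_⟩
  · obtain ⟨v, hv⟩ := hD u
    simp only [mem_inter, N2, mem_filter] at hv
    exact ⟨v, hv.2, hv.1.2⟩
  · rw [Fintype.card_fin] at hcard
    exact hcard.trans_eq (by ring)

namespace SimpleGraph.Subgraph.IsMatching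

variable {V : Type*} [Fintype V] {G : SimpleGraph V} {M : G.Subgraph}

theorem ncard_verts (hM : M.IsMatching) : M.verts.ncard = 2 * M.edgeSet.ncard := by
  classical
  have hdeg_one : ∀ v : M.verts, M.coe.degree v = 1 := fun v => by
    rw [M.coe_degree]
    exact degree_eq_one_iff_existsUnique_adj.2 (hM v.2)
  calc M.verts.ncard = ∑ v : M.verts, M.coe.degree v := by
        simp [hdeg_one, ← Nat.card_coe_set_eq]
    _ = 2 * #M.coe.edgeFinset := by convert M.coe.sum_degrees_eq_twice_card_edges
    _ = 2 * M.edgeSet.ncard := by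
        rw [← image_coe_edgeSet_coe,
          Set.ncard_image_of_injective _ (Sym2.map.injective Subtype.val_injective),
          Set.ncard_eq_toFinset_card']
        rfl

theorem ncard_verts_le (hM : M.IsMatching) (D B : Finset V)
    (hB : ∀ ⦃v w⦄, M.Adj v w → v ∉ D → w ∉ D → v ∈ B) :
    M.verts.ncard ≤ #B + 2 * #D := by
  set partners : Finset V := D.biUnion fun w => {v | M.Adj w v}
  have hpartners : #partners ≤ #D := calc
    #partners ≤ ∑ w ∈ D, #{v | M.Adj w v} := card_biUnion_le
    _ ≤ ∑ w ∈ D, 1 := sum_le_sum fun w _ => card_le_one.2 fun a ha b hb =>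
        hM.eq_of_adj_left (mem_filter.1 ha).2 (mem_filter.1 hb).2
    _ = #D := by rw [card_eq_sum_ones]
  have hcover : M.verts ⊆ ↑(B ∪ D ∪ partners) := by
    intro v hv
    obtain ⟨w, hvw, -⟩ := hM hv
    by_cases hvD : v ∈ D
    · simp [hvD]
    by_cases hwD : w ∈ D
    · simp only [coe_union, Set.mem_union, mem_coe, partners, mem_biUnion, mem_filter]
      exact Or.inr ⟨w, hwD, mem_univ v, hvw.symm⟩
    · simp [hB hvw hvD hwD]
  calc M.verts.ncard ≤ #(B ∪ D ∪ partners) := by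
        simpa only [Set.ncard_coe_finset] using Set.ncard_le_ncard hcover
    _ ≤ #B + #D + #partners :=
      (card_union_le _ _).trans (Nat.add_le_add_right (card_union_le _ _) _)
    _ ≤ #B + 2 * #D := by omega

end SimpleGraph.Subgraph.IsMatching

theorem exists_isTotalRestrainedHopDomSet_card_le (G : SimpleGraph (Fin n)) {M : G.Subgraph}
    (hM : M.IsMatching) {D : Finset (Fin n)} (hD : IsTwoStepDomSet G D) :
    ∃ S : Finset (Fin n), IsTotalRestrainedHopDomSet G S ∧
      #S + 2 * M.edgeSet.ncard ≤ n + 2 * #D := by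
  set B : Finset (Fin n) := {v | ∃ w, M.Adj v w ∧ v ∉ D ∧ w ∉ D}
  have hDB : ∀ v ∈ D, v ∉ B := fun v hv hvB => by
    obtain ⟨-, w, -, hvD, -⟩ := mem_filter.1 hvB
    exact hvD hv
  refine ⟨Bᶜ, ⟨fun u => ?_, fun u hu => ?_⟩, ?_⟩
  · obtain ⟨v, hvD, huv⟩ := hD u
    exact ⟨v, mem_compl.2 (hDB v hvD), huv⟩
  · obtain ⟨-, w, huw, huD, hwD⟩ := mem_filter.1 (notMem_compl.1 hu)
    exact ⟨w, notMem_compl.2 (mem_filter.2 ⟨mem_univ w, u, huw.symm, hwD, huD⟩),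
      M.adj_sub huw⟩
  · have hcover := hM.ncard_verts_le D B fun v w hvw hvD hwD =>
      mem_filter.2 ⟨mem_univ v, w, hvw, hvD, hwD⟩
    have hBn := card_le_univ B
    rw [hM.ncard_verts] at hcover
    rw [Fintype.card_fin] at hBn
    rw [card_compl, Fintype.card_fin]
    omega

theorem exists_isMatching_ncard_edgeSet_eq_matchingNum (G : SimpleGraph (Fin n)) :
    ∃ M : G.Subgraph, M.IsMatching ∧ M.edgeSet.ncard = matchingNum G := by
  refine Nat.sSup_mem (s := {k | ∃ M : G.Subgraph, M.IsMatching ∧ M.edgeSet.ncard = k})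
    ⟨0, ⊥, fun v hv => hv.elim, by simp⟩ ⟨Nat.card (Sym2 (Fin n)), ?_⟩
  rintro k ⟨M, -, rfl⟩
  exact (Set.ncard_le_ncard (Set.subset_univ _)).trans_eq (Set.ncard_univ _)

theorem stmt4_general {n : ℕ} (G : SimpleGraph (Fin n)) (hδh : 1 ≤ minHopDeg G) :
    (trhDomNum G : ℝ) ≤
      (2 * Real.log (minHopDeg G) + minHopDeg G + 2) / (minHopDeg G) * n
        - 2 * matchingNum G := by
  obtain ⟨M, hM, hMcard⟩ := exists_isMatching_ncard_edgeSet_eq_matchingNum G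
  obtain ⟨D, hD, hDcard⟩ := exists_isTwoStepDomSet_card_le G hδh
  obtain ⟨S, hS, hScard⟩ := exists_isTotalRestrainedHopDomSet_card_le G hM hD
  have htrh : trhDomNum G ≤ #S := Nat.sInf_le ⟨S, hS, rfl⟩
  have hcount : (trhDomNum G + 2 * matchingNum G : ℝ) ≤ n + 2 * #D := by
    exact_mod_cast (by omega : trhDomNum G + 2 * matchingNum G ≤ n + 2 * #D)
  have hδ : (minHopDeg G : ℝ) ≠ 0 := by exact_mod_cast (by omega : minHopDeg G ≠ 0)
  have hbound : (2 * Real.log (minHopDeg G) + minHopDeg G + 2) / minHopDeg G * n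
      = n + 2 * ((Real.log (minHopDeg G) + 1) / minHopDeg G * n) := by
    field_simp
    ring
  rw [hbound]
  linarith

theorem stmt4 {n : ℕ} (G : SimpleGraph (Fin n)) (hδh : 1 ≤ minHopDeg G)
    (hν : hopDomNum G ≤ matchingNum G) :
    (trhDomNum G : ℝ) ≤
      (2 * Real.log (minHopDeg G) + minHopDeg G + 2) / (minHopDeg G) * n
        - 2 * matchingNum G :=
  stmt4_general G hδh
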